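/- If G is an FS-regular abelian group, then the direct sum G ⊕ ℤ is also FS-regular. -/

import Mathlib

/-- The subset sums multiset: the multiset of sums of all sub-multisets of `A`. -/
def FS {G : Type*} [AddCommGroup G] (A : Multiset G) : Multiset G :=
  A.powerset.map Multiset.sum

/-- `A ∼₀ A'`: `A'` is obtained from `A` by flipping the signs of a zero-sum sub-multiset. -/
def Sim0 {G : Type*} [AddCommGroup G] [DecidableEq G] (A A' : Multiset G) : Prop :=
  ∃ B ≤ A, B.sum = 0 ∧ A' = (A - B) + B.map (fun x => -x)

/-- A group `G` is `FS`-regular if `FS A = FS A'` exactly when `A ∼₀ A'`. -/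
def FSRegular (G : Type*) [AddCommGroup G] [DecidableEq G] : Prop :=
  ∀ A A' : Multiset G, FS A = FS A' ↔ Sim0 A A'

/-!
Say `IsFlip c A A'` when `A'` arises from `A` by negating a sub-multiset of sum `c`. Such flips
compose, and they translate subset sums: `FS A' = FS A - c`. This is best seen in the group ring
`ℤ[K]`, where `FS A` becomes `∏_{a ∈ A} (1 + X^a)` and `1 + X^(-a) = X^(-a) (1 + X^a)`.

Given `FS A = FS A'` in `G × ℤ`, flip the elements of negative height (second coordinate) in both
multisets. The results `A₀`, `A₀'` have nonnegative heights and `FS A₀' = FS A₀ - c`. As the least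
height in both `FS` is `0`, `c` has height `0`, and the height-zero slice of `FS A₀` is `FS` of the
height-zero part `Z` of `A₀`; FS-regularity of `G` makes `Z'` a flip of `Z`. An FS-regular group has
no `2`-torsion (if `2g = 0` then `FS {g, g} = FS {g, 0}`), so every `1 + X^a` is a non-zero-divisor
in `ℤ[G × ℤ]`. Cancelling `∏_{z ∈ Z} (1 + X^z)` shows that the parts of positive height have equal
subset sums, and such a multiset is determined by its subset sums: peel off an element of least
height and cancel its factor.
-/

open Multiset AddMonoidAlgebra

section Flip

variable {K L : Type*} [AddCommGroup K] [DecidableEq K] [AddCommGroup L] [DecidableEq L]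

-- `Sim0` is definitionally `IsFlip 0`.
def IsFlip (c : K) (A A' : Multiset K) : Prop :=
  ∃ B ≤ A, B.sum = c ∧ A' = (A - B) + B.map (fun x => -x)

omit [DecidableEq K] in
lemma map_neg_map_neg (B : Multiset K) : (B.map (-·)).map (-·) = B := by
  simp

omit [DecidableEq K] in
lemma sum_map_neg_self (B : Multiset K) : (B.map (-·)).sum = -B.sum :=
  sum_map_neg' B

omit [AddCommGroup K] in
lemma exists_eq_add_of_le_add {B C D : Multiset K} (h : B ≤ C + D) :
    ∃ B₁ ≤ C, ∃ B₂ ≤ D, B = B₁ + B₂ :=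
  ⟨B ∩ C, inter_le_right, B - C, Multiset.sub_le_iff_le_add'.2 h, by
    rw [add_comm, sub_add_inter]⟩

theorem IsFlip.trans {c d : K} {A A' A'' : Multiset K} (h₁ : IsFlip c A A')
    (h₂ : IsFlip d A' A'') : IsFlip (c + d) A A'' := by
  obtain ⟨B₀, hB₀, rfl, rfl⟩ := h₁
  obtain ⟨B₁, hB₁, rfl, rfl⟩ := h₂
  obtain ⟨C, rfl⟩ := exists_add_of_le hB₀
  rw [add_tsub_cancel_left] at hB₁ ⊢
  -- `B₁` takes `D` from the untouched part `C` and `E` from the negated part `-B₀`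
  obtain ⟨D, hD, E, hE, rfl⟩ := exists_eq_add_of_le_add hB₁
  obtain ⟨C', rfl⟩ := exists_add_of_le hD
  obtain ⟨R, hR⟩ := exists_add_of_le hE
  obtain rfl : B₀ = E.map (-·) + R.map (-·) := by rw [← map_add, ← hR, map_neg_map_neg]
  refine ⟨R.map (-·) + D, Multiset.le_iff_exists_add.2 ⟨E.map (-·) + C', by abel⟩, ?_, ?_⟩
  · simp only [sum_add, sum_map_neg_self]
    abel
  · rw [show E.map (-·) + R.map (-·) + (D + C') = (R.map (-·) + D) + (E.map (-·) + C') by abel,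
      add_tsub_cancel_left]
    simp only [Multiset.map_add, map_neg_map_neg]
    rw [show D + C' + (E + R) = (D + E) + (C' + R) by abel, add_tsub_cancel_left]
    abel

theorem IsFlip.symm {c : K} {A A' : Multiset K} (h : IsFlip c A A') : IsFlip (-c) A' A := by
  obtain ⟨B, hB, rfl, rfl⟩ := h
  obtain ⟨C, rfl⟩ := exists_add_of_le hB
  refine ⟨B.map (-·), le_add_left _ _, sum_map_neg_self B, ?_⟩
  rw [add_tsub_cancel_left, add_tsub_cancel_right, map_neg_map_neg, add_comm]

theorem IsFlip.add_right {c : K} {A A' : Multiset K} (h : IsFlip c A A') (P : Multiset K) :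
    IsFlip c (A + P) (A' + P) := by
  obtain ⟨B, hB, hc, rfl⟩ := h
  obtain ⟨C, rfl⟩ := exists_add_of_le hB
  refine ⟨B, hB.trans (le_add_right _ _), hc, ?_⟩
  rw [add_assoc B C P, add_tsub_cancel_left, add_tsub_cancel_left]
  abel

theorem IsFlip.map {c : K} {A A' : Multiset K} (h : IsFlip c A A') (f : K →+ L) :
    IsFlip (f c) (A.map f) (A'.map f) := by
  obtain ⟨B, hB, rfl, rfl⟩ := h
  obtain ⟨C, rfl⟩ := exists_add_of_le hB
  refine ⟨B.map f, map_le_map hB, (map_multiset_sum f B).symm, ?_⟩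
  simp

end Flip

section SubsetSums

variable {K L : Type*} [AddCommGroup K] [AddCommGroup L]

lemma FS_zero : FS (0 : Multiset K) = {0} := rfl

lemma FS_cons (a : K) (A : Multiset K) : FS (a ::ₘ A) = FS A + (FS A).map (a + ·) := by
  simp [FS, powerset_cons]

lemma card_FS (A : Multiset K) : card (FS A) = 2 ^ card A := by
  simp [FS]

lemma mem_FS {A : Multiset K} {s : K} : s ∈ FS A ↔ ∃ B ≤ A, B.sum = s := by
  simp [FS]

lemma zero_mem_FS (A : Multiset K) : 0 ∈ FS A :=
  mem_FS.2 ⟨0, zero_le _, sum_zero⟩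

lemma mem_FS_of_mem {A : Multiset K} {a : K} (ha : a ∈ A) : a ∈ FS A :=
  mem_FS.2 ⟨{a}, singleton_le.2 ha, sum_singleton a⟩

lemma FS_map (f : K →+ L) (A : Multiset K) : FS (A.map f) = (FS A).map f := by
  induction A using Multiset.induction with
  | empty => simp [FS_zero]
  | cons a A ih => simp [FS_cons, ih]

end SubsetSums

section GroupRing

variable {K : Type*}

noncomputable def toGroupRing (M : Multiset K) : AddMonoidAlgebra ℤ K :=
  (M.map fun s => single s 1).sum

lemma coeff_toGroupRing [DecidableEq K] (M : Multiset K) (k : K) :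
    (toGroupRing M).coeff k = M.count k := by
  induction M using Multiset.induction with
  | empty => simp [toGroupRing]
  | cons a M ih =>
    simp only [toGroupRing, map_cons, sum_cons, coeff_add] at ih ⊢
    rw [Finsupp.add_apply, ih, count_cons]
    by_cases h : k = a
    · simp [h, add_comm]
    · simp [coeff_single, h]

lemma toGroupRing_injective : Function.Injective (toGroupRing : Multiset K → _) := by
  classical
  intro M N h
  ext k
  exact_mod_cast (coeff_toGroupRing M k).symm.trans
    ((congrArg (·.coeff k) h).trans (coeff_toGroupRing N k))

lemma toGroupRing_add (M N : Multiset K) :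
    toGroupRing (M + N) = toGroupRing M + toGroupRing N := by
  simp [toGroupRing]

variable [AddCommGroup K]

noncomputable def fsProd (A : Multiset K) : AddMonoidAlgebra ℤ K :=
  (A.map fun a => 1 + single a 1).prod

lemma toGroupRing_map_add_left (t : K) (M : Multiset K) :
    toGroupRing (M.map (t + ·)) = single t 1 * toGroupRing M := by
  simp only [toGroupRing, map_map, Function.comp_def, ← sum_map_mul_left, single_mul_single,
    mul_one]

lemma fsProd_cons (a : K) (A : Multiset K) : fsProd (a ::ₘ A) = (1 + single a 1) * fsProd A := by
  simp [fsProd]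

lemma fsProd_add (A B : Multiset K) : fsProd (A + B) = fsProd A * fsProd B := by
  simp [fsProd]

lemma toGroupRing_FS (A : Multiset K) : toGroupRing (FS A) = fsProd A := by
  induction A using Multiset.induction with
  | empty => simp [FS_zero, toGroupRing, fsProd, one_def]
  | cons a A ih => rw [FS_cons, toGroupRing_add, toGroupRing_map_add_left, ih, fsProd_cons]; ring

lemma FS_eq_iff {A A' : Multiset K} : FS A = FS A' ↔ fsProd A = fsProd A' := by
  rw [← toGroupRing_FS, ← toGroupRing_FS, toGroupRing_injective.eq_iff]

lemma FS_eq_map_add_iff {A A' : Multiset K} {t : K} :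
    FS A' = (FS A).map (t + ·) ↔ fsProd A' = single t 1 * fsProd A := by
  rw [← toGroupRing_FS, ← toGroupRing_FS, ← toGroupRing_map_add_left,
    toGroupRing_injective.eq_iff]

lemma fsProd_map_neg (B : Multiset K) :
    fsProd (B.map (-·)) = single (-B.sum) 1 * fsProd B := by
  induction B using Multiset.induction with
  | empty => simp [fsProd, one_def]
  | cons a B ih =>
    have hfactor :
        (1 + single (-a) 1 : AddMonoidAlgebra ℤ K) = single (-a) 1 * (1 + single a 1) := by
      rw [mul_add, mul_one, single_mul_single, neg_add_cancel, mul_one, ← one_def, add_comm]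
    have hsplit : (single (-(a + B.sum)) 1 : AddMonoidAlgebra ℤ K) =
        single (-a) 1 * single (-B.sum) 1 := by
      rw [single_mul_single, mul_one, neg_add]
    rw [map_cons, fsProd_cons, ih, fsProd_cons, hfactor, sum_cons, hsplit]
    ring

theorem IsFlip.FS_eq [DecidableEq K] {c : K} {A A' : Multiset K} (h : IsFlip c A A') :
    FS A' = (FS A).map (-c + ·) := by
  obtain ⟨B, hB, rfl, rfl⟩ := h
  obtain ⟨C, rfl⟩ := exists_add_of_le hB
  rw [FS_eq_map_add_iff, add_tsub_cancel_left, fsProd_add, fsProd_add, fsProd_map_neg]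
  ring

end GroupRing

section NonZeroDivisors

variable {K : Type*} [AddCommGroup K]

lemma odd_addOrderOf (h2 : ∀ x : K, x + x = 0 → x = 0) {a : K} (ha : IsOfFinAddOrder a) :
    Odd (addOrderOf a) := by
  rw [Nat.odd_iff, ← Nat.not_even_iff, even_iff_two_dvd]
  rintro ⟨m, hm⟩
  have hpos := ha.addOrderOf_pos
  have hma : m • a = 0 := h2 _ (by rw [← add_nsmul, ← two_mul, ← hm, addOrderOf_nsmul_eq_zero])
  have := Nat.le_of_dvd (by omega) (addOrderOf_dvd_of_nsmul_eq_zero hma)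
  omega

lemma Prod.eq_zero_of_add_self_eq_zero {L : Type*} [AddCommGroup L]
    (h2K : ∀ x : K, x + x = 0 → x = 0) (h2L : ∀ y : L, y + y = 0 → y = 0) (x : K × L)
    (hx : x + x = 0) : x = 0 :=
  Prod.ext (h2K _ (congrArg Prod.fst hx)) (h2L _ (congrArg Prod.snd hx))

lemma coeff_add_nsmul_of_one_add_single_mul_eq_zero {a : K} {f : AddMonoidAlgebra ℤ K}
    (hf : (1 + single a 1) * f = 0) (n : ℕ) (y : K) :
    f.coeff (y + n • a) = (-1) ^ n * f.coeff y := by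
  have hstep : ∀ z, f.coeff (z + a) = -f.coeff z := by
    intro z
    have := congrArg (·.coeff (z + a)) hf
    simp [add_mul, coeff_single_mul_apply] at this
    linarith
  induction n with
  | zero => simp
  | succ n ih => rw [succ_nsmul, ← add_assoc, hstep, ih, pow_succ]; ring

lemma isLeftRegular_one_add_single (h2 : ∀ x : K, x + x = 0 → x = 0) (a : K) :
    IsLeftRegular (1 + single a 1 : AddMonoidAlgebra ℤ K) := by
  rw [isLeftRegular_iff_right_eq_zero_of_mul]
  intro f hf
  apply coeff_injective
  ext y
  by_contra hy
  by_cases ha : IsOfFinAddOrder a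
  · -- `f(y) = f(y + n a) = (-1)^n f(y)` with `n` the (odd) order of `a`
    have := coeff_add_nsmul_of_one_add_single_mul_eq_zero hf (addOrderOf a) y
    rw [addOrderOf_nsmul_eq_zero, add_zero, (odd_addOrderOf h2 ha).neg_one_pow] at this
    simp at hy
    omega
  · -- otherwise the points `y + n a` are distinct and all lie in the support of `f`
    have hinj : Function.Injective fun n : ℕ => y + n • a :=
      (add_right_injective y).comp (injective_nsmul_iff_not_isOfFinAddOrder.2 ha)
    refine Set.infinite_of_injective_forall_mem hinj (fun n => ?_) f.coeff.support.finite_toSet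
    simpa [coeff_add_nsmul_of_one_add_single_mul_eq_zero hf] using hy

lemma isLeftRegular_fsProd (h2 : ∀ x : K, x + x = 0 → x = 0) (A : Multiset K) :
    IsLeftRegular (fsProd A) :=
  prod_induction _ _ (fun _ _ => IsLeftRegular.mul) isRegular_one.left <| by
    simp only [mem_map]
    rintro _ ⟨a, -, rfl⟩
    exact isLeftRegular_one_add_single h2 a

lemma FS_eq_of_FS_add_eq_map (h2 : ∀ x : K, x + x = 0 → x = 0) {Z Z' P P' : Multiset K} {t : K}
    (hZ : FS Z' = (FS Z).map (t + ·)) (h : FS (Z' + P') = (FS (Z + P)).map (t + ·)) :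
    FS P' = FS P := by
  rw [FS_eq_map_add_iff] at hZ h
  rw [fsProd_add, fsProd_add, hZ] at h
  have hreg : IsLeftRegular (single t 1 * fsProd Z) :=
    (isLeftRegular_of_mul_eq_one (by rw [single_mul_single, neg_add_cancel, mul_one, one_def])).mul
      (isLeftRegular_fsProd h2 Z)
  exact FS_eq_iff.2 (hreg (by rw [← mul_assoc] at h; exact h))

end NonZeroDivisors

section FSRegularity

variable {K L : Type*} [AddCommGroup K] [DecidableEq K] [AddCommGroup L] [DecidableEq L]

theorem FSRegular.eq_zero_of_add_self_eq_zero (h : FSRegular K) {g : K} (hg : g + g = 0) :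
    g = 0 := by
  by_contra hg0
  -- `{g, g}` and `{g, 0}` both have subset sums `{0, 0, g, g}`
  have hFS : FS {g, g} = FS {g, 0} := by
    have hsq : (single g 1 * single g 1 : AddMonoidAlgebra ℤ K) = 1 := by
      rw [single_mul_single, hg, mul_one, one_def]
    rw [FS_eq_iff]
    simp only [fsProd, insert_eq_cons, map_cons, map_singleton, prod_cons, prod_singleton,
      ← one_def]
    linear_combination hsq
  obtain ⟨B, hB, -, hgg⟩ := (h _ _).1 hFS
  have hnegB : B.map (-·) = B := by
    refine (map_congr rfl fun b hb => ?_).trans (map_id B)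
    obtain rfl : b = g := by simpa using mem_of_le hB hb
    exact neg_eq_of_add_eq_zero_left hg
  rw [hnegB, tsub_add_cancel_of_le hB] at hgg
  simpa [Ne.symm hg0] using congrArg (count 0) hgg

theorem FSRegular.isFlip_of_FS_eq_map (h : FSRegular K) {c : K} {A A' : Multiset K}
    (hFS : FS A' = (FS A).map (-c + ·)) : IsFlip c A A' := by
  have h0 := zero_mem_FS A'
  rw [hFS, mem_map] at h0
  obtain ⟨s, hs, hs0⟩ := h0
  obtain rfl : c = s := neg_add_eq_zero.1 hs0
  obtain ⟨B, hB, hBc⟩ := mem_FS.1 hs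
  have hflip : IsFlip c A ((A - B) + B.map (-·)) := ⟨B, hB, hBc, rfl⟩
  simpa using hflip.trans ((h _ _).1 (hflip.FS_eq.trans hFS.symm))

theorem FSRegular.isFlip_map_of_FS_eq_map (h : FSRegular K) (f : K →+ L)
    (hf : Function.Injective f) {c : K} {W W' : Multiset K}
    (hFS : FS (W'.map f) = (FS (W.map f)).map (-f c + ·)) :
    IsFlip (f c) (W.map f) (W'.map f) := by
  refine (h.isFlip_of_FS_eq_map (map_injective hf ?_)).map f
  simpa [FS_map, Function.comp_def] using hFS

end FSRegularity

section ProdInt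

variable {G : Type*} [AddCommGroup G]

lemma snd_nonneg_of_mem_FS {A : Multiset (G × ℤ)} (hA : ∀ x ∈ A, 0 ≤ x.2) {s : G × ℤ}
    (hs : s ∈ FS A) : 0 ≤ s.2 := by
  obtain ⟨B, hB, rfl⟩ := mem_FS.1 hs
  rw [snd_sum]
  exact sum_nonneg fun y hy => by
    obtain ⟨x, hx, rfl⟩ := mem_map.1 hy
    exact hA x (mem_of_le hB hx)

lemma FS_filter_snd_eq_zero {A : Multiset (G × ℤ)} (hA : ∀ x ∈ A, 0 ≤ x.2) :
    (FS A).filter (·.2 = 0) = FS (A.filter (·.2 = 0)) := by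
  induction A using Multiset.induction with
  | empty => rfl
  | cons a A ih =>
    have hA' : ∀ x ∈ A, 0 ≤ x.2 := fun x hx => hA x (mem_cons_of_mem hx)
    have ha := hA a (mem_cons_self a A)
    rw [FS_cons, filter_add, ih hA', filter_map]
    rcases ha.eq_or_lt with ha0 | ha0
    · rw [filter_cons_of_pos (p := fun x : G × ℤ => x.2 = 0) _ ha0.symm, FS_cons, ← ih hA']
      congr 2
      exact filter_congr fun x _ => by simp [← ha0]
    · have hnil : (FS A).filter ((·.2 = 0) ∘ (a + ·)) = 0 := filter_eq_nil.2 fun x hx => by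
        have := snd_nonneg_of_mem_FS hA' hx
        simp only [Function.comp_apply, Prod.snd_add]
        omega
      rw [filter_cons_of_neg (p := fun x : G × ℤ => x.2 = 0) _ ha0.ne', hnil, Multiset.map_zero,
        add_zero]

lemma snd_eq_zero_of_FS_eq_map {A A' : Multiset (G × ℤ)} (hA : ∀ x ∈ A, 0 ≤ x.2)
    (hA' : ∀ x ∈ A', 0 ≤ x.2) {c : G × ℤ} (hFS : FS A' = (FS A).map (-c + ·)) : c.2 = 0 := by
  have hle : 0 ≤ (-c + 0).2 := snd_nonneg_of_mem_FS hA' (hFS ▸ mem_map_of_mem _ (zero_mem_FS A))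
  have h0 := zero_mem_FS A'
  rw [hFS, mem_map] at h0
  obtain ⟨s, hs, hs0⟩ := h0
  obtain rfl : c = s := neg_add_eq_zero.1 hs0
  have := snd_nonneg_of_mem_FS hA hs
  simp at hle
  omega

lemma mem_of_mem_FS_of_le_snd {P : Multiset (G × ℤ)} {a : G × ℤ} (ha : 0 < a.2)
    (hP : ∀ x ∈ P, a.2 ≤ x.2) (haP : a ∈ FS P) : a ∈ P := by
  obtain ⟨B, hB, rfl⟩ := mem_FS.1 haP
  have hcard : (card B : ℤ) * B.sum.2 ≤ 1 * B.sum.2 := by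
    have := card_nsmul_le_sum (s := B.map Prod.snd) (a := B.sum.2)
      fun y hy => by
        obtain ⟨x, hx, rfl⟩ := mem_map.1 hy
        exact hP x (mem_of_le hB hx)
    simpa [← snd_sum] using this
  have hB0 : B ≠ 0 := by rintro rfl; simp at ha
  have := card_pos.2 hB0
  have := le_of_mul_le_mul_right hcard ha
  obtain ⟨b, rfl⟩ := card_eq_one.1 (show card B = 1 by omega)
  simpa using mem_of_le hB (mem_singleton_self b)

variable [DecidableEq G]

lemma exists_isFlip_snd_nonneg (A : Multiset (G × ℤ)) :
    ∃ c A₀, IsFlip c A A₀ ∧ ∀ x ∈ A₀, 0 ≤ x.2 := by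
  refine ⟨_, _, ⟨A.filter (·.2 < 0), filter_le _ _, rfl, rfl⟩, fun x hx => ?_⟩
  rw [sub_filter_eq_filter_not] at hx
  rcases mem_add.1 hx with hx | hx
  · exact not_lt.1 (mem_filter.1 hx).2
  · obtain ⟨y, hy, rfl⟩ := mem_map.1 hx
    simpa using (of_mem_filter hy).le

theorem eq_of_FS_eq_of_snd_pos (h2 : ∀ x : G × ℤ, x + x = 0 → x = 0)
    {P P' : Multiset (G × ℤ)} (hP : ∀ x ∈ P, 0 < x.2) (hP' : ∀ x ∈ P', 0 < x.2)
    (h : FS P = FS P') : P = P' := by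
  induction P using Multiset.strongInductionOn generalizing P' with
  | ih P ih =>
  rcases eq_or_ne P 0 with rfl | hP0
  · have hcard := congrArg card h
    rw [card_FS, card_FS, card_zero, eq_comm] at hcard
    exact (card_eq_zero.1 (Nat.pow_right_injective le_rfl hcard)).symm
  -- an element of least height in `P + P'` lies in both, and its factor `1 + X^a` cancels
  obtain ⟨a, ha, hmin⟩ := exists_min_image Prod.snd (s := P + P') (by simp [hP0])
  have haP : a ∈ P ∧ a ∈ P' := by
    rcases mem_add.1 ha with ha | ha
    · exact ⟨ha, mem_of_mem_FS_of_le_snd (hP a ha) (fun x hx => hmin x (mem_add.2 (.inr hx)))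
        (h ▸ mem_FS_of_mem ha)⟩
    · exact ⟨mem_of_mem_FS_of_le_snd (hP' a ha) (fun x hx => hmin x (mem_add.2 (.inl hx)))
        (h ▸ mem_FS_of_mem ha), ha⟩
  rw [← cons_erase haP.1, ← cons_erase haP.2] at h ⊢
  rw [FS_eq_iff, fsProd_cons, fsProd_cons] at h
  rw [ih _ (erase_lt.2 haP.1) (fun x hx => hP x (mem_of_mem_erase hx))
    (fun x hx => hP' x (mem_of_mem_erase hx)) (FS_eq_iff.2 (isLeftRegular_one_add_single h2 a h))]

theorem FSRegular.isFlip_of_FS_eq_map_of_snd_eq_zero (h : FSRegular G)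
    {Z Z' : Multiset (G × ℤ)} {c : G × ℤ} (hZ : ∀ x ∈ Z, x.2 = 0) (hZ' : ∀ x ∈ Z', x.2 = 0)
    (hc : c.2 = 0) (hFS : FS Z' = (FS Z).map (-c + ·)) : IsFlip c Z Z' := by
  have hinl : ∀ {Y : Multiset (G × ℤ)}, (∀ x ∈ Y, x.2 = 0) →
      (Y.map Prod.fst).map (AddMonoidHom.inl G ℤ) = Y := fun {Y} hY => by
    rw [Multiset.map_map]
    refine (map_congr rfl fun x hx => ?_).trans (Multiset.map_id Y)
    exact Prod.ext rfl (hY x hx).symm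
  have hcinl : AddMonoidHom.inl G ℤ c.1 = c := Prod.ext rfl hc.symm
  rw [← hinl hZ, ← hinl hZ', ← hcinl] at hFS ⊢
  exact h.isFlip_map_of_FS_eq_map _ (Prod.mk_left_injective 0) hFS

theorem FSRegular.isFlip_of_FS_eq_map_of_snd_nonneg (h : FSRegular G)
    {A A' : Multiset (G × ℤ)} {c : G × ℤ} (hA : ∀ x ∈ A, 0 ≤ x.2) (hA' : ∀ x ∈ A', 0 ≤ x.2)
    (hFS : FS A' = (FS A).map (-c + ·)) : IsFlip c A A' := by
  have h2 := Prod.eq_zero_of_add_self_eq_zero (fun _ => h.eq_zero_of_add_self_eq_zero)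
    (fun (n : ℤ) _ => by omega)
  have hc := snd_eq_zero_of_FS_eq_map hA hA' hFS
  have hZ : FS (A'.filter (·.2 = 0)) = (FS (A.filter (·.2 = 0))).map (-c + ·) := by
    rw [← FS_filter_snd_eq_zero hA', hFS, filter_map, ← FS_filter_snd_eq_zero hA]
    congr 1
    exact filter_congr fun x _ => by simp [hc]
  have hpos : ∀ {Y : Multiset (G × ℤ)}, (∀ x ∈ Y, 0 ≤ x.2) →
      ∀ x ∈ Y.filter (¬ ·.2 = 0), 0 < x.2 :=
    fun hY x hx => (hY x (mem_of_mem_filter hx)).lt_of_ne' (mem_filter.1 hx).2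
  have hP : A'.filter (¬ ·.2 = 0) = A.filter (¬ ·.2 = 0) :=
    eq_of_FS_eq_of_snd_pos h2 (hpos hA') (hpos hA)
      (FS_eq_of_FS_add_eq_map h2 hZ (by rwa [filter_add_not, filter_add_not]))
  rw [← filter_add_not (·.2 = 0) A, ← filter_add_not (·.2 = 0) A', hP]
  exact (h.isFlip_of_FS_eq_map_of_snd_eq_zero (fun x hx => (mem_filter.1 hx).2)
    (fun x hx => (mem_filter.1 hx).2) hc hZ).add_right _

end ProdInt

/-- If `G` is `FS`-regular, then so is `G ⊕ ℤ`. -/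
theorem FSRegular_prod_int {G : Type*} [AddCommGroup G] [DecidableEq G]
    (h : FSRegular G) : FSRegular (G × ℤ) := by
  intro A A'
  constructor
  · intro hFS
    obtain ⟨d, A₀, hA₀, hA₀pos⟩ := exists_isFlip_snd_nonneg A
    obtain ⟨d', A₀', hA₀', hA₀'pos⟩ := exists_isFlip_snd_nonneg A'
    have hFS₀ : FS A₀' = (FS A₀).map (-(d' - d) + ·) := by
      rw [hA₀'.FS_eq, hA₀.FS_eq, ← hFS, Multiset.map_map, comp_add_left]
      congr 1
      funext x
      abel
    have hflip := (hA₀.trans (h.isFlip_of_FS_eq_map_of_snd_nonneg hA₀pos hA₀'pos hFS₀)).trans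
      hA₀'.symm
    rwa [show d + (d' - d) + -d' = 0 by abel] at hflip
  · intro hflip
    simpa using (show IsFlip 0 A A' from hflip).FS_eq.symm
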